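/- arXiv:2209.07439 — 4 statements merged into one kernel-verified Lean document; each statement's English description precedes it below -/
import Mathlib

section
/- Let R be a semiring and M an R-module whose underlying additive commutative monoid carries a partial order for which addition is monotone in each argument. Let ι : M → M be monotone, idempotent (ι ∘ ι = ι), and satisfy ι m + ι m' ≤ ι (m + m') and ι (r • m) = r • ι m for all m, m' ∈ M and r ∈ R. Then the set of fixpoints Mι = { m | ι m = m } contains 0 and is closed under the operations m ⊞ m' := ι (m + m') and r ⊙ m := ι (r • m), and these operations satisfy all R-module axioms on Mι: ⊞ is associative and commutative with neutral element 0, r ⊙ (m ⊞ m') = (r ⊙ m) ⊞ (r ⊙ m'), (r + s) ⊙ m = (r ⊙ m) ⊞ (s ⊙ m), (r * s) ⊙ m = r ⊙ (s ⊙ m), 1 ⊙ m = m, 0 ⊙ m = 0, and r ⊙ 0 = 0. -/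
/-- The fixpoints of an idempotent lax homomorphism `ι` on a
preordered (here: partially ordered) `R`-module `M` form an `R`-module under
the induced operations `m ⊞ m' := ι (m + m')` and `r ⊙ m := ι (r • m)`. -/
theorem fixpoints_form_module
    {R M : Type*} [Semiring R] [AddCommMonoid M] [Module R M] [PartialOrder M]
    (add_mono : ∀ a b c : M, a ≤ b → c + a ≤ c + b)
    (ι : M → M)
    (hmono : Monotone ι)
    (hidem : ι ∘ ι = ι)
    (hlax_add : ∀ m m' : M, ι m + ι m' ≤ ι (m + m'))
    (hsmul : ∀ (r : R) (m : M), ι (r • m) = r • ι m) :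
    -- 0 is a fixpoint
    ι (0 : M) = 0 ∧
    -- fixpoints are closed under ⊞
    (∀ m m' : M, ι m = m → ι m' = m' → ι (ι (m + m')) = ι (m + m')) ∧
    -- fixpoints are closed under ⊙
    (∀ (r : R) (m : M), ι m = m → ι (ι (r • m)) = ι (r • m)) ∧
    -- ⊞ is associative
    (∀ m m' m'' : M, ι m = m → ι m' = m' → ι m'' = m'' →
        ι (ι (m + m') + m'') = ι (m + ι (m' + m''))) ∧
    -- ⊞ is commutative
    (∀ m m' : M, ι m = m → ι m' = m' → ι (m + m') = ι (m' + m)) ∧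
    -- 0 is neutral for ⊞
    (∀ m : M, ι m = m → ι (m + 0) = m ∧ ι (0 + m) = m) ∧
    -- r ⊙ (m ⊞ m') = (r ⊙ m) ⊞ (r ⊙ m')
    (∀ (r : R) (m m' : M), ι m = m → ι m' = m' →
        ι (r • ι (m + m')) = ι (ι (r • m) + ι (r • m'))) ∧
    -- (r + s) ⊙ m = (r ⊙ m) ⊞ (s ⊙ m)
    (∀ (r s : R) (m : M), ι m = m →
        ι ((r + s) • m) = ι (ι (r • m) + ι (s • m))) ∧
    -- (r * s) ⊙ m = r ⊙ (s ⊙ m)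
    (∀ (r s : R) (m : M), ι m = m →
        ι ((r * s) • m) = ι (r • ι (s • m))) ∧
    -- 1 ⊙ m = m
    (∀ m : M, ι m = m → ι ((1 : R) • m) = m) ∧
    -- 0 ⊙ m = 0
    (∀ m : M, ι m = m → ι ((0 : R) • m) = 0) ∧
    -- r ⊙ 0 = 0
    (∀ r : R, ι (r • (0 : M)) = 0) := by
  have hid : ∀ x : M, ι (ι x) = ι x := fun x => congrFun hidem x
  have hzero : ι (0 : M) = 0 := by
    have := hsmul (0 : R) (0 : M)
    simpa using this
  -- key: ι(ι(a+b)+c) = ι(a+b+c) for fixpoints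
  have key : ∀ a b c : M, ι a = a → ι b = b → ι c = c →
      ι (ι (a + b) + c) = ι (a + b + c) := by
    intro a b c ha hb hc
    apply le_antisymm
    · have h1 : ι (a + b) + ι c ≤ ι ((a + b) + c) := hlax_add _ _
      rw [hc] at h1
      have := hmono h1
      rw [hid] at this
      exact this
    · have h0 : a + b ≤ ι (a + b) := by
        have := hlax_add a b; rwa [ha, hb] at this
      have h1 : a + b + c ≤ ι (a + b) + c := by
        calc a + b + c = c + (a + b) := by abel
          _ ≤ c + ι (a + b) := add_mono _ _ _ h0
          _ = ι (a + b) + c := by abel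
      exact hmono h1
  refine ⟨hzero, ?_, ?_, ?_, ?_, ?_, ?_, ?_, ?_, ?_, ?_, ?_⟩
  · intro m m' _ _; exact hid _
  · intro r m _; exact hid _
  · intro m m' m'' hm hm' hm''
    have h2 : ι (m + ι (m' + m'')) = ι (m + (m' + m'')) := by
      have h := key m' m'' m hm' hm'' hm
      calc ι (m + ι (m' + m'')) = ι (ι (m' + m'') + m) := by rw [add_comm]
        _ = ι (m' + m'' + m) := h
        _ = ι (m + (m' + m'')) := by rw [add_comm]
    rw [key m m' m'' hm hm' hm'', h2, add_assoc]
  · intro m m' _ _; rw [add_comm]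
  · intro m hm; constructor
    · rw [add_zero, hm]
    · rw [zero_add, hm]
  · intro r m m' hm hm'
    have fm : ι (r • m) = r • m := by rw [hsmul, hm]
    have fm' : ι (r • m') = r • m' := by rw [hsmul, hm']
    rw [fm, fm', ← hsmul, hid, smul_add]
  · intro r s m hm
    have fm : ι (r • m) = r • m := by rw [hsmul, hm]
    have fm' : ι (s • m) = s • m := by rw [hsmul, hm]
    rw [fm, fm', add_smul]
  · intro r s m hm
    have fs : ι (s • m) = s • m := by rw [hsmul, hm]
    rw [fs, mul_smul]
  · intro m hm; rw [one_smul, hm]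
  · intro m _; rw [zero_smul, hzero]
  · intro r; rw [smul_zero, hzero]
end

section
/- Let γ : V → Finset L be a finitely supported closed coeffect context, x₀ : V a variable with γ x₀ = ∅, and X : Finset L. Let δ be the context with δ x₀ = X and δ y = γ y for y ≠ x₀, and define Θ : V → Finset L by: Θ y is the (finite) union of all the sets δ z over those z in the support of δ with δ z ∩ X ≠ ∅, whenever δ y ∩ X ≠ ∅; and Θ y = δ y otherwise. Then Θ is the closure of δ, i.e. Θ is closed, δ ⊆̂ Θ, and Θ ⊆̂ Θ' for every closed context Θ' with δ ⊆̂ Θ'. -/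
/-- A coeffect context `γ : V → Finset L` is closed if whenever `ℓ` and `ℓ'`
are both links of `x` and `ℓ'` is a link of `y`, then `ℓ` is a link of `y`. -/
def IsClosedCtx {V L : Type*} (γ : V → Finset L) : Prop :=
  ∀ (x y : V) (ℓ ℓ' : L), ℓ ∈ γ x → ℓ' ∈ γ x → ℓ' ∈ γ y → ℓ ∈ γ y

/-- the explicit description of the closure of a closed context
extended at a fresh variable `x₀` by a coeffect `X`. -/
theorem closure_of_extension {L V : Type*} [DecidableEq L] [DecidableEq V] (res : L)
    (γ : V → Finset L) (hfin : {x : V | γ x ≠ ∅}.Finite) (hγ : IsClosedCtx γ)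
    (x₀ : V) (hx₀ : γ x₀ = ∅) (X : Finset L)
    (δ : V → Finset L) (hδ : δ = Function.update γ x₀ X)
    (hδfin : {x : V | δ x ≠ ∅}.Finite)
    (Θ : V → Finset L)
    (hΘ : ∀ y : V, Θ y =
      if δ y ∩ X ≠ ∅ then
        (hδfin.toFinset.filter (fun z => δ z ∩ X ≠ ∅)).biUnion (fun z => δ z)
      else δ y) :
    -- Θ is closed,
    IsClosedCtx Θ ∧
    -- Θ contains δ pointwise,
    (∀ x : V, δ x ⊆ Θ x) ∧
    -- and Θ is below every closed context containing δ:
    (∀ Θ' : V → Finset L, IsClosedCtx Θ' → (∀ x : V, δ x ⊆ Θ' x) →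
        ∀ x : V, Θ x ⊆ Θ' x) := by
  have hδx₀ : δ x₀ = X := by rw [hδ]; simp
  have hδne : ∀ y, y ≠ x₀ → δ y = γ y := by
    intro y hy; rw [hδ, Function.update_of_ne hy]
  have memU : ∀ ℓ : L,
      ℓ ∈ (hδfin.toFinset.filter (fun z => δ z ∩ X ≠ ∅)).biUnion (fun z => δ z) ↔
      ∃ z, δ z ∩ X ≠ ∅ ∧ ℓ ∈ δ z := by
    intro ℓ
    simp only [Finset.mem_biUnion, Finset.mem_filter, Set.Finite.mem_toFinset,
      Set.mem_setOf_eq]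
    constructor
    · rintro ⟨z, ⟨_, h1⟩, h2⟩; exact ⟨z, h1, h2⟩
    · rintro ⟨z, h1, h2⟩
      refine ⟨z, ⟨?_, h1⟩, h2⟩
      intro h; rw [h] at h1; simp at h1
  -- key lemma: an element of the big union that also lies in δ y forces δ y ∩ X ≠ ∅
  have key : ∀ (y : V) (ℓ' : L),
      ℓ' ∈ (hδfin.toFinset.filter (fun z => δ z ∩ X ≠ ∅)).biUnion (fun z => δ z) →
      ℓ' ∈ δ y → δ y ∩ X ≠ ∅ := by
    intro y ℓ' hU' hy
    obtain ⟨z, hz, hℓz⟩ := (memU ℓ').1 hU'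
    by_cases hzx : z = x₀
    · subst hzx
      rw [hδx₀] at hℓz
      intro h
      exact Finset.notMem_empty ℓ' (h ▸ Finset.mem_inter.2 ⟨hy, hℓz⟩)
    · by_cases hyx : y = x₀
      · subst hyx
        rw [hδx₀] at hy ⊢
        intro h; rw [Finset.inter_self] at h
        exact Finset.notMem_empty ℓ' (h ▸ hy)
      · rw [hδne z hzx] at hz hℓz
        rw [hδne y hyx] at hy ⊢
        obtain ⟨m, hm⟩ := Finset.nonempty_iff_ne_empty.2 hz
        rw [Finset.mem_inter] at hm
        have hmy : m ∈ γ y := hγ z y m ℓ' hm.1 hℓz hy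
        intro h
        exact Finset.notMem_empty m (h ▸ Finset.mem_inter.2 ⟨hmy, hm.2⟩)
  refine ⟨?_, ?_, ?_⟩
  · -- closedness
    intro x y ℓ ℓ' hℓx hℓ'x hℓ'y
    rw [hΘ] at hℓx hℓ'x hℓ'y ⊢
    by_cases hy : δ y ∩ X ≠ ∅
    · rw [if_pos hy] at hℓ'y ⊢
      by_cases hx : δ x ∩ X ≠ ∅
      · rw [if_pos hx] at hℓx
        exact hℓx
      · rw [if_neg hx] at hℓ'x
        exact absurd (key x ℓ' hℓ'y hℓ'x) hx
    · rw [if_neg hy] at hℓ'y ⊢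
      by_cases hx : δ x ∩ X ≠ ∅
      · rw [if_pos hx] at hℓ'x
        exact absurd (key y ℓ' hℓ'x hℓ'y) hy
      · rw [if_neg hx] at hℓx hℓ'x
        have hy' : δ y ∩ X = ∅ := not_not.mp hy
        have hx' : δ x ∩ X = ∅ := not_not.mp hx
        by_cases hxx : x = x₀
        · subst hxx
          rw [hδx₀] at hℓ'x
          exact absurd (Finset.mem_inter.2 ⟨hℓ'y, hℓ'x⟩)
            (by rw [hy']; exact Finset.notMem_empty _)
        · by_cases hyy : y = x₀
          · subst hyy
            rw [hδx₀] at hℓ'y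
            exact absurd (Finset.mem_inter.2 ⟨hℓ'x, hℓ'y⟩)
              (by rw [hx']; exact Finset.notMem_empty _)
          · rw [hδne x hxx] at hℓx hℓ'x
            rw [hδne y hyy] at hℓ'y ⊢
            exact hγ x y ℓ ℓ' hℓx hℓ'x hℓ'y
  · -- δ ⊆ Θ
    intro x
    rw [hΘ x]
    by_cases hx : δ x ∩ X ≠ ∅
    · rw [if_pos hx]
      intro ℓ hℓ
      exact (memU ℓ).2 ⟨x, hx, hℓ⟩
    · rw [if_neg hx]
  · -- minimality
    intro Θ' hc hsub y
    rw [hΘ y]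
    by_cases hy : δ y ∩ X ≠ ∅
    · rw [if_pos hy]
      intro ℓ hℓ
      obtain ⟨z, hz, hℓz⟩ := (memU ℓ).1 hℓ
      obtain ⟨m, hm⟩ := Finset.nonempty_iff_ne_empty.2 hz
      obtain ⟨n, hn⟩ := Finset.nonempty_iff_ne_empty.2 hy
      rw [Finset.mem_inter] at hm hn
      have hmX : m ∈ Θ' x₀ := hsub x₀ (by rw [hδx₀]; exact hm.2)
      have hℓ0 : ℓ ∈ Θ' x₀ := hc z x₀ ℓ m (hsub z hℓz) (hsub z hm.1) hmX
      have hnX : n ∈ Θ' x₀ := hsub x₀ (by rw [hδx₀]; exact hn.2)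
      exact hc x₀ y ℓ n hℓ0 hnX (hsub y hn.1)
    · rw [if_neg hy]
      exact hsub y
end

section
/- For every finitely supported coeffect context γ : V → Finset L there exists a pointwise-least closed context γ⋆ with γ ⊆̂ γ⋆; that is, γ⋆ is closed, γ x ⊆ γ⋆ x for all x, and γ⋆ ⊆̂ δ for every closed δ with γ ⊆̂ δ. Moreover γ⋆ has the same support as γ, and γ⋆ x is contained in the union of all the sets γ z (z in the support of γ); in particular γ⋆ is again finitely supported. -/
/-- every finitely supported coeffect context has a pointwise-least
closed context containing it; this closure has the same support, is contained in
the union of all the coeffects of `γ`, and is again finitely supported. -/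
theorem closure_exists {L V : Type*} [DecidableEq L] (res : L)
    (γ : V → Finset L) (hfin : {x : V | γ x ≠ ∅}.Finite) :
    ∃ γs : V → Finset L,
      IsClosedCtx γs ∧
      (∀ x : V, γ x ⊆ γs x) ∧
      (∀ δ : V → Finset L, IsClosedCtx δ → (∀ x : V, γ x ⊆ δ x) →
          ∀ x : V, γs x ⊆ δ x) ∧
      {x : V | γs x ≠ ∅} = {x : V | γ x ≠ ∅} ∧
      (∀ x : V, γs x ⊆ hfin.toFinset.biUnion γ) ∧
      {x : V | γs x ≠ ∅}.Finite := by
  classical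
  -- the one-step relation: two links co-occur in some coeffect of γ
  set S : L → L → Prop := fun ℓ ℓ' => ∃ z : V, ℓ ∈ γ z ∧ ℓ' ∈ γ z with hS
  set R : L → L → Prop := Relation.TransGen S with hR
  have hSsymm : Symmetric S := fun a b ⟨z, h1, h2⟩ => ⟨z, h2, h1⟩
  have hRsymm : Symmetric R := by
    intro a b h
    induction h with
    | single h => exact Relation.TransGen.single (hSsymm h)
    | tail _ hbc ih => exact (Relation.TransGen.single (hSsymm hbc)).trans ih
  -- the closure
  set U : Finset L := hfin.toFinset.biUnion γ with hU
  set γs : V → Finset L :=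
    fun x => U.filter (fun ℓ => ∃ ℓ' ∈ γ x, R ℓ ℓ') with hγs
  -- membership characterization
  have memU : ∀ {ℓ x}, ℓ ∈ γ x → ℓ ∈ U := by
    intro ℓ x h
    simp only [hU, Finset.mem_biUnion, Set.Finite.mem_toFinset, Set.mem_setOf_eq]
    exact ⟨x, fun he => by simp [he] at h, h⟩
  have memUR : ∀ {ℓ ℓ'}, R ℓ ℓ' → ℓ ∈ U := by
    intro ℓ ℓ' h
    induction h with
    | single h => obtain ⟨z, h1, _⟩ := h; exact memU h1
    | tail _ _ ih => exact ih
  have hmem : ∀ {ℓ x}, ℓ ∈ γs x ↔ ∃ ℓ' ∈ γ x, R ℓ ℓ' := by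
    intro ℓ x
    constructor
    · intro h; exact (Finset.mem_filter.mp h).2
    · intro h
      obtain ⟨ℓ', hℓ', hr⟩ := h
      exact Finset.mem_filter.mpr ⟨memUR hr, ⟨ℓ', hℓ', hr⟩⟩
  have hsub : ∀ x, γ x ⊆ γs x := by
    intro x ℓ h
    exact hmem.mpr ⟨ℓ, h, Relation.TransGen.single ⟨x, h, h⟩⟩
  refine ⟨γs, ?_, hsub, ?_, ?_, ?_, ?_⟩
  · -- closed
    intro x y ℓ ℓ' h1 h2 h3
    obtain ⟨a, ha, hra⟩ := hmem.mp h1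
    obtain ⟨b, hb, hrb⟩ := hmem.mp h2
    obtain ⟨c, hc, hrc⟩ := hmem.mp h3
    have hab : R a b := Relation.TransGen.single ⟨x, ha, hb⟩
    exact hmem.mpr ⟨c, hc, (((hra.trans hab).trans (hRsymm hrb)).trans hrc)⟩
  · -- least
    intro δ hδ hγδ x ℓ h
    obtain ⟨ℓ', hℓ', hr⟩ := hmem.mp h
    -- show: R ℓ ℓ' → ℓ' ∈ δ y → ℓ ∈ δ y
    have key : ∀ {a b : L}, R a b → ∀ y, b ∈ δ y → a ∈ δ y := by
      intro a b h
      induction h with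
      | single h =>
        intro y hy
        obtain ⟨z, h1, h2⟩ := h
        exact hδ z y a _ (hγδ z h1) (hγδ z h2) hy
      | tail hab hbc ih =>
        intro y hy
        obtain ⟨z, h1, h2⟩ := hbc
        exact ih y (hδ z y _ _ (hγδ z h1) (hγδ z h2) hy)
    exact key hr x (hγδ x hℓ')
  · -- support equality
    ext x
    simp only [Set.mem_setOf_eq]
    constructor
    · intro h he
      apply h
      rw [Finset.eq_empty_iff_forall_notMem]
      intro ℓ hℓ
      obtain ⟨ℓ', hℓ', _⟩ := hmem.mp hℓ
      simp [he] at hℓ'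
    · intro h he
      apply h
      rw [Finset.eq_empty_iff_forall_notMem]
      intro ℓ hℓ
      exact absurd (hsub x hℓ) (by simp [he])
  · intro x ℓ h
    exact (Finset.mem_filter.mp h).1
  · -- finiteness
    have : {x : V | γs x ≠ ∅} = {x : V | γ x ≠ ∅} := by
      ext x
      simp only [Set.mem_setOf_eq]
      constructor
      · intro h he
        apply h
        rw [Finset.eq_empty_iff_forall_notMem]
        intro ℓ hℓ
        obtain ⟨ℓ', hℓ', _⟩ := hmem.mp hℓ
        simp [he] at hℓ'
      · intro h he
        apply h
        rw [Finset.eq_empty_iff_forall_notMem]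
        intro ℓ hℓ
        exact absurd (hsub x hℓ) (by simp [he])
    rw [this]; exact hfin
end

section
/- The sharing coeffects form a preordered semiring: the tuple 𝓛 = (Finset L, ⊆, ∪, ◁, ∅, {res}) satisfies all the axioms of a preordered semiring. Equivalently, Finset L carries a semiring structure whose addition is ∪ with zero ∅ and whose multiplication is ◁ with one {res}, and both operations are monotone in each argument with respect to ⊆. -/
/-- The operation `X ◁ Y` on sharing coeffects: it is `∅` if `X = ∅`, it is `Y`
if `X ≠ ∅` and `res ∉ Y`, and it is `(Y \ {res}) ∪ X` if `X ≠ ∅` and `res ∈ Y`. -/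
def tri {L : Type*} [DecidableEq L] (res : L) (X Y : Finset L) : Finset L :=
  if X = ∅ then ∅ else if res ∈ Y then (Y \ {res}) ∪ X else Y

lemma tri_assoc {L : Type*} [DecidableEq L] (res : L) (X Y Z : Finset L) :
    tri res (tri res X Y) Z = tri res X (tri res Y Z) := by
  by_cases hX : X = ∅
  · simp [tri, hX]
  by_cases hY : Y = ∅
  · simp [tri, hY, hX]
  by_cases hZ : Z = ∅
  · simp [tri, hZ, hX, hY]
  by_cases hrY : res ∈ Y <;> by_cases hrZ : res ∈ Z <;>
    simp [tri, hX, hY, hZ, hrY, hrZ, Finset.union_eq_empty] <;>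
    ext a <;> simp <;> tauto

lemma tri_mono {L : Type*} [DecidableEq L] (res : L) (X X' Y Y' : Finset L)
    (hX : X ⊆ X') (hY : Y ⊆ Y') : tri res X Y ⊆ tri res X' Y' := by
  by_cases h1 : X = ∅
  · simp [tri, h1]
  have h1' : X' ≠ ∅ := fun h => h1 (Finset.subset_empty.mp (h ▸ hX))
  by_cases h2 : res ∈ Y
  · have h2' : res ∈ Y' := hY h2
    simp only [tri, h1, h1', h2, h2', if_false, if_true]
    exact Finset.union_subset_union (Finset.sdiff_subset_sdiff hY subset_rfl) hX
  · by_cases h2' : res ∈ Y'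
    · simp only [tri, h1, h1', h2, h2', if_false, if_true]
      intro a ha
      simp only [Finset.mem_union, Finset.mem_sdiff, Finset.mem_singleton]
      exact Or.inl ⟨hY ha, fun h => h2 (h ▸ ha)⟩
    · simpa [tri, h1, h1', h2, h2'] using hY

/-- the sharing coeffects `(Finset L, ⊆, ∪, ◁, ∅, {res})` form a
preordered semiring: `(Finset L, ∪, ∅)` is a commutative monoid with `∪`
monotone in each argument, `(Finset L, ◁, {res})` is a monoid with `◁`
monotone in each argument, `◁` distributes over `∪` on both sides, and `∅` is
absorbing for `◁` on both sides (`⊆` is of course a preorder). -/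
theorem sharing_coeffects_semiring {L : Type*} [DecidableEq L] (res : L) :
    -- (Finset L, ∪, ∅) is a commutative monoid
    (∀ X Y Z : Finset L, (X ∪ Y) ∪ Z = X ∪ (Y ∪ Z)) ∧
    (∀ X Y : Finset L, X ∪ Y = Y ∪ X) ∧
    (∀ X : Finset L, X ∪ ∅ = X) ∧
    (∀ X : Finset L, ∅ ∪ X = X) ∧
    -- ∪ is monotone in each argument
    (∀ X X' Y Y' : Finset L, X ⊆ X' → Y ⊆ Y' → X ∪ Y ⊆ X' ∪ Y') ∧
    -- (Finset L, ◁, {res}) is a monoid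
    (∀ X Y Z : Finset L, tri res (tri res X Y) Z = tri res X (tri res Y Z)) ∧
    (∀ X : Finset L, tri res {res} X = X) ∧
    (∀ X : Finset L, tri res X {res} = X) ∧
    -- ◁ is monotone in each argument
    (∀ X X' Y Y' : Finset L, X ⊆ X' → Y ⊆ Y' → tri res X Y ⊆ tri res X' Y') ∧
    -- ◁ distributes over ∪ on both sides
    (∀ X Y Z : Finset L, tri res (X ∪ Y) Z = tri res X Z ∪ tri res Y Z) ∧
    (∀ X Y Z : Finset L, tri res X (Y ∪ Z) = tri res X Y ∪ tri res X Z) ∧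
    -- ∅ is absorbing for ◁ on both sides
    (∀ X : Finset L, tri res X ∅ = ∅) ∧
    (∀ X : Finset L, tri res ∅ X = ∅) := by
  refine ⟨fun X Y Z => Finset.union_assoc X Y Z, fun X Y => Finset.union_comm X Y,
    fun X => Finset.union_empty X, fun X => Finset.empty_union X,
    fun X X' Y Y' h1 h2 => Finset.union_subset_union h1 h2,
    tri_assoc res, ?_, ?_, tri_mono res, ?_, ?_, ?_, ?_⟩
  · intro X
    by_cases h : res ∈ X <;> simp [tri, h] <;> ext a <;> simp <;>
      exact fun h1 => Or.imp_right (fun h2 => h2 ▸ h) (em' (a = res)).symm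
  · intro X
    by_cases h : X = ∅ <;> simp [tri, h]
  · intro X Y Z
    by_cases hX : X = ∅ <;> by_cases hY : Y = ∅ <;> by_cases hrZ : res ∈ Z <;>
      simp [tri, hX, hY, hrZ, Finset.union_eq_empty] <;> ext a <;> simp <;> tauto
  · intro X Y Z
    by_cases hX : X = ∅ <;> by_cases hrY : res ∈ Y <;> by_cases hrZ : res ∈ Z <;>
      simp [tri, hX, hrY, hrZ] <;> ext a <;> simp <;> aesop
  · intro X
    simp [tri]
  · intro X
    simp [tri]
end
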